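/- arXiv:1901.03261 — 3 statements merged into one kernel-verified Lean document; each statement's English description precedes it below -/
import Mathlib

section
/- Let ρ_L, ρ_H ∈ (0,1) with ρ_L + ρ_H ≤ 1 and ρ_L > 1/2, and define Z(x) = (1−2ρ_L)ρ_L·x³ + ((ρ_L−ρ_H)² − (1−2ρ_L))·x² − 2(ρ_L−ρ_H)(1−2ρ_H)·x + (1−2ρ_H)². Then Z(x) > 0 for all x ≤ 1/ρ_L, Z(2) < 0, and hence Z has a real root in (1/ρ_L, 2). -/
theorem stmt_5 (ρL ρH : ℝ) (hL : ρL ∈ Set.Ioo (0 : ℝ) 1) (hH : ρH ∈ Set.Ioo (0 : ℝ) 1)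
    (hsum : ρL + ρH ≤ 1) (hhalf : 1 / 2 < ρL) :
    let Z : ℝ → ℝ := fun x =>
      (1 - 2 * ρL) * ρL * x ^ 3 + ((ρL - ρH) ^ 2 - (1 - 2 * ρL)) * x ^ 2
        - 2 * (ρL - ρH) * (1 - 2 * ρH) * x + (1 - 2 * ρH) ^ 2
    (∀ x : ℝ, x ≤ 1 / ρL → 0 < Z x) ∧ Z 2 < 0 ∧
      ∃ x : ℝ, 1 / ρL < x ∧ x < 2 ∧ Z x = 0 := by
  intro Z
  obtain ⟨hL0, hL1⟩ := hL
  obtain ⟨hH0, hH1⟩ := hH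
  have hH2 : ρH < 1 / 2 := by linarith
  have hZid : ∀ x : ℝ, Z x
      = (1 - 2 * ρL) * (ρL * x - 1) * x ^ 2 + ((ρL - ρH) * x - (1 - 2 * ρH)) ^ 2 := by
    intro x; simp only [Z]; ring
  have hpos : ∀ x : ℝ, x ≤ 1 / ρL → 0 < Z x := by
    intro x hx
    rw [hZid]
    rcases lt_or_eq_of_le hx with hx' | hx'
    · have h1 : ρL * x - 1 < 0 := by
        have := (mul_lt_mul_iff_right₀ hL0).2 hx'
        rw [mul_one_div, div_self (ne_of_gt hL0)] at this
        linarith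
      rcases eq_or_ne x 0 with h0 | h0
      · subst h0
        have : 0 < (1 - 2 * ρH) := by linarith
        nlinarith
      · have hx2 : 0 < x ^ 2 := by positivity
        have : 0 < (1 - 2 * ρL) * (ρL * x - 1) * x ^ 2 :=
          mul_pos (mul_pos_of_neg_of_neg (by linarith) h1) hx2
        nlinarith [sq_nonneg ((ρL - ρH) * x - (1 - 2 * ρH))]
    · -- x = 1/ρL
      have hxe : ρL * x = 1 := by
        rw [hx', mul_one_div, div_self (ne_of_gt hL0)]
      have h1 : (1 - 2 * ρL) * (ρL * x - 1) * x ^ 2 = 0 := by rw [hxe]; ring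
      rw [h1, zero_add]
      have key : (ρL - ρH) * x - (1 - 2 * ρH) = ρH * (2 - x) := by
        have : ρH * x * ρL = ρH := by
          have := congrArg (fun t => ρH * t) hxe
          simpa [mul_assoc, mul_comm, mul_left_comm] using this
        nlinarith [hxe]
      rw [key]
      have hx2 : x < 2 := by
        rw [hx']
        rw [div_lt_iff₀ hL0]; linarith
      have := mul_pos hH0 (show (0:ℝ) < 2 - x by linarith)
      positivity
  have hZ2 : Z 2 < 0 := by
    have : Z 2 = -3 * (2 * ρL - 1) ^ 2 := by simp only [Z]; ring
    rw [this]
    nlinarith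
  refine ⟨hpos, hZ2, ?_⟩
  have hab : (1 : ℝ) / ρL < 2 := by rw [div_lt_iff₀ hL0]; linarith
  have hc : ContinuousOn Z (Set.Icc (1 / ρL) 2) := by
    apply Continuous.continuousOn; simp only [Z]; continuity
  have hZa : 0 < Z (1 / ρL) := hpos _ le_rfl
  have := intermediate_value_Ioo' (le_of_lt hab) hc
    (Set.mem_Ioo.mpr ⟨hZ2, hZa⟩ : (0:ℝ) ∈ Set.Ioo (Z 2) (Z (1/ρL)))
  obtain ⟨x, hx, hfx⟩ := this
  exact ⟨x, hx.1, hx.2, hfx⟩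
end

section
/- Let ρ_I > 0, ρ_H > 0, ρ_L = 1 − ρ_I − ρ_H ≠ 1/2, and suppose (y, λ) with y > 0, λ > y + 1 satisfies both ρ_I(λ−y−1)(λ²−λ+y+1) − ρ_H λ² y = 0 and (1−ρ_H)(λ−y−1)(λ²−λ+y+1) − ρ_H(λ²y + 2λ(y+1) − (y+1)²) = 0. Then (1−2ρ_L)·y = ρ_I(λ−2). -/
theorem stmt_7 (ρI ρH ρL y l : ℝ) (hI : 0 < ρI) (hH : 0 < ρH)
    (hL : ρL = 1 - ρI - ρH) (hhalf : ρL ≠ 1 / 2)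
    (hy : 0 < y) (hl : y + 1 < l)
    (h1 : ρI * (l - y - 1) * (l ^ 2 - l + y + 1) - ρH * l ^ 2 * y = 0)
    (h2 : (1 - ρH) * (l - y - 1) * (l ^ 2 - l + y + 1)
        - ρH * (l ^ 2 * y + 2 * l * (y + 1) - (y + 1) ^ 2) = 0) :
    (1 - 2 * ρL) * y = ρI * (l - 2) := by
  subst hL
  have hlpos : 0 < l := by linarith
  have hne : ρH * l ^ 2 ≠ 0 := by positivity
  have key : ((1 - 2 * (1 - ρI - ρH)) * y - ρI * (l - 2)) * (ρH * l ^ 2)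
      = (1 - 2 * ρH) * (ρI * (l - y - 1) * (l ^ 2 - l + y + 1) - ρH * l ^ 2 * y)
        - ρI * ((1 - ρH) * (l - y - 1) * (l ^ 2 - l + y + 1)
          - ρH * (l ^ 2 * y + 2 * l * (y + 1) - (y + 1) ^ 2)) := by ring
  rw [h1, h2] at key
  simp only [mul_zero, sub_zero] at key
  have := (mul_eq_zero.mp key).resolve_right hne
  linarith
end

section
/- Let y ≥ 0 and let x₁, x₂, x₃ > 0 with A(y,z)·x = λ·x for A(y,z) = [[z,1,y],[0,0,1+y],[z,0,1+y]], z > 0, and λ the Perron eigenvalue. If 0 < α < x₁/(x₃ + (λ/(y+1) − 1)x₂), then for all sufficiently small δ > 0 the componentwise inequality A(y, z+δ)·(x₁, x₂, x₃ + αδx₂/(y+1))ᵀ ≥ (λ + αδ)·(x₁, x₂, x₃ + αδx₂/(y+1))ᵀ holds. -/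
private lemma stmt19_aux2 (y l α δ x₁ x₂ x₃ : ℝ) (hP' : (y:ℝ) + 1 ≠ 0)
    (h1 : (1 + y) * x₃ = l * x₂) :
    δ * x₁ + (1 + y) * (α * δ * x₂ / (y + 1))
      - (l * (α * δ * x₂ / (y + 1)) + α * δ * (x₃ + α * δ * x₂ / (y + 1)))
      = δ * ((x₁ - α * (2 * x₃ - x₂)) * (y + 1) - α ^ 2 * x₂ * δ) / (y + 1) := by
  field_simp
  linear_combination (α * δ) * h1

private lemma stmt19_aux0 (y α δ x₁ x₂ : ℝ) (hP' : (y:ℝ) + 1 ≠ 0) :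
    δ * x₁ + y * (α * δ * x₂ / (y + 1)) - α * δ * x₁
      = δ * ((y + 1) * x₁ + y * α * x₂ - α * (y + 1) * x₁) / (y + 1) := by
  field_simp

private lemma stmt19_auxw (y α δ x₂ : ℝ) (hP' : (y:ℝ) + 1 ≠ 0) :
    (1 + y) * (α * δ * x₂ / (y + 1)) = α * δ * x₂ := by
  field_simp
  ring

theorem stmt_19 (y z l α x₁ x₂ x₃ : ℝ) (hy : 0 ≤ y) (hz : 0 < z)
    (hl : y + 1 < l) (hy1 : (1 : ℝ) < y + 1)
    (hx₁ : 0 < x₁) (hx₂ : 0 < x₂) (hx₃ : 0 < x₃)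
    (hev : (!![z, 1, y; 0, 0, 1 + y; z, 0, 1 + y] : Matrix (Fin 3) (Fin 3) ℝ).mulVec
        ![x₁, x₂, x₃] = l • ![x₁, x₂, x₃])
    (hα0 : 0 < α) (hα : α < x₁ / (x₃ + (l / (y + 1) - 1) * x₂)) :
    ∃ δ₀ > 0, ∀ δ : ℝ, 0 < δ → δ < δ₀ →
      ∀ i : Fin 3,
        (l + α * δ) * (![x₁, x₂, x₃ + α * δ * x₂ / (y + 1)] i)
          ≤ (!![z + δ, 1, y; 0, 0, 1 + y; z + δ, 0, 1 + y] :
              Matrix (Fin 3) (Fin 3) ℝ).mulVec ![x₁, x₂, x₃ + α * δ * x₂ / (y + 1)] i := by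
  have hP : (0:ℝ) < y + 1 := by linarith
  have hP' : (y:ℝ) + 1 ≠ 0 := ne_of_gt hP
  have h0 := congrFun hev 0
  have h1 := congrFun hev 1
  have h2 := congrFun hev 2
  simp [Matrix.mulVec, dotProduct, Fin.sum_univ_three] at h0 h1 h2
  clear hev
  have hx23 : x₂ < x₃ := by nlinarith
  have hDeq : x₃ + (l / (y + 1) - 1) * x₂ = 2 * x₃ - x₂ := by
    have hq : l / (y + 1) * x₂ = x₃ := by
      field_simp
      linarith
    nlinarith [hq]
  rw [hDeq] at hα
  have hDpos : (0:ℝ) < 2 * x₃ - x₂ := by linarith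
  have hαx : α * (2 * x₃ - x₂) < x₁ := (lt_div_iff₀ hDpos).mp hα
  have hlx1 : l * x₁ = x₂ + (l - 1) * x₃ := by linarith
  have key1 : 0 ≤ (y + 1) * x₁ + y * α * x₂ - α * (y + 1) * x₁ := by
    have hlpos : (0:ℝ) < l := by linarith
    have hS : (y + 1) * x₁ ≤ 2 * (y + 1) * x₃ - x₂ := by
      nlinarith [hlx1, h1, hx23, mul_pos hP hx₃]
    nlinarith [mul_le_mul_of_nonneg_left hS hα0.le, hαx, mul_pos hα0 hx₂]
  refine ⟨(x₁ - α * (2 * x₃ - x₂)) * (y + 1) / (α ^ 2 * x₂),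
    div_pos (mul_pos (by linarith) hP) (by positivity), ?_⟩
  intro δ hδ hδ₀ i
  have hkey3 : α ^ 2 * x₂ * δ < (x₁ - α * (2 * x₃ - x₂)) * (y + 1) := by
    have h := (lt_div_iff₀ (by positivity : (0:ℝ) < α ^ 2 * x₂)).mp hδ₀
    nlinarith [h]
  have hw := stmt19_auxw y α δ x₂ hP'
  fin_cases i <;>
    simp [Matrix.mulVec, dotProduct, Fin.sum_univ_three]
  · -- row 0
    have hr0 : α * δ * x₁ ≤ δ * x₁ + y * (α * δ * x₂ / (y + 1)) := by
      rw [← sub_nonneg]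
      have heq := stmt19_aux0 y α δ x₁ x₂ hP'
      rw [heq]
      exact div_nonneg (mul_nonneg hδ.le key1) hP.le
    linarith [h0, hr0]
  · -- row 1
    linarith [h1, hw]
  · -- row 2
    have hr2 : l * (α * δ * x₂ / (y + 1)) + α * δ * (x₃ + α * δ * x₂ / (y + 1))
        ≤ δ * x₁ + (1 + y) * (α * δ * x₂ / (y + 1)) := by
      rw [← sub_nonneg]
      have heq := stmt19_aux2 y l α δ x₁ x₂ x₃ hP' h1
      rw [heq]
      exact div_nonneg (mul_nonneg hδ.le (by linarith)) hP.le
    linarith [h2, hr2]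
end
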